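/- Let a, b ∈ ℂ with a ≠ b, and let n₊, n₋ be positive integers. For u ∈ ℂ define the polynomial P_u(x,y) = (ay + x − u)^{n₊}(by + x − u)^{n₋} ∈ ℂ[x,y]. Then for every u ∈ ℂ the gradient of P_u at (0,0) is proportional to a fixed vector independent of u; consequently, for all u₁, u₂ ∈ ℂ, the 2×2 Jacobian matrix whose columns are the gradients of P_{u₁} and P_{u₂} at (0,0) has determinant zero. Hence, for X = ℙ¹ × ℙ¹ with the diagonal PSL₂-action, no ample line bundle 𝓛 = O(n₊D⁺ + n₋D⁻) yields a closed immersion F_𝓛 : X → ℙ(V_𝓛^*). -/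
import Mathlib


/-!
STATEMENT 11.  For `a ≠ b` in `ℂ` and positive integers `n₊, n₋`, set
`P_u(x,y) = (ay + x − u)^{n₊} (by + x − u)^{n₋}`.  Then for every `u` the gradient of
`P_u` at `(0,0)` is proportional to a fixed vector independent of `u`; consequently the
`2×2` Jacobian with columns the gradients of `P_{u₁}` and `P_{u₂}` at `(0,0)` has
determinant zero for all `u₁, u₂`.  Hence, for `X = ℙ¹ × ℙ¹` with the diagonal
`PSL₂`-action, no ample line bundle `𝓛 = O(n₊D⁺ + n₋D⁻)` yields a closed immersion
`F_𝓛 : X → ℙ(V_𝓛^*)` — granted the differential criterion, which says that `F_𝓛` is a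
closed immersion iff two of the translated sections have nondegenerate Jacobian at the
`B_-`-fixed point `z = (0,0)`.
-/

/-- The translated section `(u ẇ_0)σ_𝓛` of `𝓛 = O(n₊D⁺ + n₋D⁻)` on the canonical chart
of `ℙ¹ × ℙ¹`, as a function of the coordinates `(x, y)`. -/
noncomputable def translatedSection (a b : ℂ) (np nm : ℕ) (u : ℂ) : ℂ × ℂ → ℂ :=
  fun p => (a * p.2 + p.1 - u) ^ np * (b * p.2 + p.1 - u) ^ nm

/-- The gradient of a function `ℂ × ℂ → ℂ` at the origin `(0,0)`. -/
noncomputable def gradAtZero (f : ℂ × ℂ → ℂ) : ℂ × ℂ :=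
  (fderiv ℂ f 0 (1, 0), fderiv ℂ f 0 (0, 1))

lemma grad_eq (a b u : ℂ) (np' nm' : ℕ) :
    gradAtZero (translatedSection a b (np'+1) (nm'+1) u)
      = ((-u)^(np'+nm'+1)) •
        (((np':ℂ)+1+((nm':ℂ)+1), a*((np':ℂ)+1) + b*((nm':ℂ)+1)) : ℂ × ℂ) := by
  have h1 : HasFDerivAt (fun p : ℂ × ℂ => a * p.2 + p.1 - u)
      (a • ContinuousLinearMap.snd ℂ ℂ ℂ + ContinuousLinearMap.fst ℂ ℂ ℂ) (0 : ℂ × ℂ) := by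
    simpa using ((hasFDerivAt_snd.const_mul a).add hasFDerivAt_fst).sub_const u
  have h2 : HasFDerivAt (fun p : ℂ × ℂ => b * p.2 + p.1 - u)
      (b • ContinuousLinearMap.snd ℂ ℂ ℂ + ContinuousLinearMap.fst ℂ ℂ ℂ) (0 : ℂ × ℂ) := by
    simpa using ((hasFDerivAt_snd.const_mul b).add hasFDerivAt_fst).sub_const u
  have hp1 := (hasDerivAt_pow (np'+1) ((fun p : ℂ × ℂ => a * p.2 + p.1 - u) 0)).comp_hasFDerivAt (0 : ℂ × ℂ) h1
  have hp2 := (hasDerivAt_pow (nm'+1) ((fun p : ℂ × ℂ => b * p.2 + p.1 - u) 0)).comp_hasFDerivAt (0 : ℂ × ℂ) h2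
  have hmul := hp1.mul hp2
  have hD : fderiv ℂ (fun p : ℂ × ℂ => (a * p.2 + p.1 - u) ^ (np'+1)
      * (b * p.2 + p.1 - u) ^ (nm'+1)) 0 = _ := hmul.fderiv
  unfold gradAtZero translatedSection
  rw [hD]
  simp [Prod.ext_iff, Prod.smul_def, smul_eq_mul]
  constructor <;> ring

theorem no_simple_immersion_of_P1xP1
    (a b : ℂ) (hab : a ≠ b)
    -- the property that `F_𝓛` is a closed immersion, for `𝓛 = O(n₊D⁺ + n₋D⁻)` on
    -- `X = ℙ¹ × ℙ¹` with the diagonal `PSL₂`-action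
    (FLIsClosedImmersion : ℕ → ℕ → Prop)
    -- the differential criterion for `F_𝓛` on `X = ℙ¹ × ℙ¹`
    (hcriterion : ∀ np nm : ℕ, 0 < np → 0 < nm →
      (FLIsClosedImmersion np nm ↔
        ∃ u₁ u₂ : ℂ,
          (gradAtZero (translatedSection a b np nm u₁)).1 *
              (gradAtZero (translatedSection a b np nm u₂)).2 -
            (gradAtZero (translatedSection a b np nm u₂)).1 *
              (gradAtZero (translatedSection a b np nm u₁)).2 ≠ 0)) :
    ∀ np nm : ℕ, 0 < np → 0 < nm →
      -- the gradients at `(0,0)` are all proportional to a fixed vector independent of `u`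
      (∃ v : ℂ × ℂ, ∀ u : ℂ, ∃ c : ℂ,
        gradAtZero (translatedSection a b np nm u) = c • v) ∧
      -- hence every `2×2` Jacobian of two translated sections is degenerate at `(0,0)`
      (∀ u₁ u₂ : ℂ,
        (gradAtZero (translatedSection a b np nm u₁)).1 *
            (gradAtZero (translatedSection a b np nm u₂)).2 -
          (gradAtZero (translatedSection a b np nm u₂)).1 *
            (gradAtZero (translatedSection a b np nm u₁)).2 = 0) ∧
      -- hence no `𝓛 = O(n₊D⁺ + n₋D⁻)` yields a closed immersion
      ¬ FLIsClosedImmersion np nm := by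
  intro np nm hnp hnm
  obtain ⟨np', rfl⟩ : ∃ k, np = k + 1 := ⟨np - 1, (Nat.succ_pred_eq_of_pos hnp).symm⟩
  obtain ⟨nm', rfl⟩ : ∃ k, nm = k + 1 := ⟨nm - 1, (Nat.succ_pred_eq_of_pos hnm).symm⟩
  have hdet : ∀ u₁ u₂ : ℂ,
      (gradAtZero (translatedSection a b (np'+1) (nm'+1) u₁)).1 *
          (gradAtZero (translatedSection a b (np'+1) (nm'+1) u₂)).2 -
        (gradAtZero (translatedSection a b (np'+1) (nm'+1) u₂)).1 *
          (gradAtZero (translatedSection a b (np'+1) (nm'+1) u₁)).2 = 0 := by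
    intro u₁ u₂
    rw [grad_eq, grad_eq]
    simp only [Prod.smul_def, smul_eq_mul]
    ring
  refine ⟨⟨(((np':ℂ)+1+((nm':ℂ)+1), a*((np':ℂ)+1) + b*((nm':ℂ)+1)) : ℂ × ℂ),
    fun u => ⟨(-u)^(np'+nm'+1), grad_eq a b u np' nm'⟩⟩, hdet, ?_⟩
  rw [hcriterion _ _ hnp hnm]
  push_neg
  intro u₁ u₂
  exact hdet u₁ u₂
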